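/- arXiv:2509.21494 — 4 statements merged into one kernel-verified Lean document; each statement's English description precedes it below -/
import Mathlib

section
/- Let n ≥ 2 be even and d ≥ 1. Then every cell of the n^d tic-tac-toe board is contained in at most 2^d − 1 winning lines, and if a cell (x_1,...,x_d) has the property that there is a common c in [n] with x_j ∈ {c, n+1−c} for every j = 1,...,d, then that cell is contained in exactly 2^d − 1 winning lines. -/
/-- `isWinningLine n d L` says that the finset `L` of cells of the `n^d`
tic-tac-toe board (cells being `d`-tuples with entries in `Fin n`, the
`0`-based version of `{1,…,n}`) is a winning line: its cells can be ordered
as `v 0, …, v (n-1)` so that each coordinate either increases `0,…,n-1`,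
decreases `n-1,…,0`, or is constant, and at least one coordinate is
non-constant. -/
def isWinningLine (n d : ℕ) (L : Finset (Fin d → Fin n)) : Prop :=
  ∃ v : Fin n → Fin d → Fin n,
    L = Finset.image v Finset.univ ∧
    (∀ i : Fin d,
      (∀ j : Fin n, v j i = j) ∨
      (∀ j : Fin n, v j i = j.rev) ∨
      (∃ c : Fin n, ∀ j : Fin n, v j i = c)) ∧
    (∃ i : Fin d, ¬ ∃ c : Fin n, ∀ j : Fin n, v j i = c)

/-! Two winning lines through `x` with the same set of non-constant coordinates coincide: in
each such coordinate a line runs as `k ↦ k` or `k ↦ rev k`, and since `n` is even, `rev` has no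
fixed point, so the parameters at which the two lines pass through `x` already decide, uniformly
in the coordinate, whether their directions agree. Hence the lines through `x` inject into the
nonempty subsets of the coordinates. If every `x i` lies in `{c, rev c}`, each nonempty `S` is
attained by the line increasing in the coordinates `i ∈ S` with `x i = c`, decreasing in the
rest of `S`, and constant outside `S`. -/

open Finset

theorem Fin.rev_ne_self_of_even {n : ℕ} (h : Even n) (k : Fin n) : k.rev ≠ k := by
  obtain ⟨m, rfl⟩ := h
  intro hk
  have := congrArg Fin.val hk
  rw [Fin.val_rev] at this
  omega

theorem Nat.card_finset_nonempty (α : Type*) [Fintype α] :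
    Nat.card {S : Finset α // S.Nonempty} = 2 ^ Fintype.card α - 1 := by
  classical
  simp_rw [Finset.nonempty_iff_ne_empty]
  rw [Nat.card_eq_fintype_card, Fintype.card_subtype_compl, Fintype.card_finset]
  simp

namespace TicTacToe

variable {n d : ℕ}

def IsLineCoord (f : Fin n → Fin n) : Prop :=
  (∀ j, f j = j) ∨ (∀ j, f j = j.rev) ∨ ∃ c, ∀ j, f j = c

def IsIdOrRev (f : Fin n → Fin n) : Prop :=
  (∀ j, f j = j) ∨ ∀ j, f j = j.rev

theorem IsLineCoord.isIdOrRev_or_const {f : Fin n → Fin n} (hf : IsLineCoord f) {a b : Fin n}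
    (hab : f a = b) : IsIdOrRev f ∨ ∀ j, f j = b := by
  rcases hf with hf | hf | ⟨c, hc⟩
  · exact .inl (.inl hf)
  · exact .inl (.inr hf)
  · exact .inr fun j => by rw [hc, ← hab, hc]

theorem IsIdOrRev.exists_ne (heven : Even n) {f : Fin n → Fin n} (hf : IsIdOrRev f) (a : Fin n) :
    ∃ j, f j ≠ a := by
  rcases hf with hf | hf
  · exact ⟨a.rev, by rw [hf]; exact Fin.rev_ne_self_of_even heven a⟩
  · exact ⟨a, by rw [hf]; exact Fin.rev_ne_self_of_even heven a⟩

theorem IsIdOrRev.apply_eq_apply_of_apply_eq (heven : Even n) {f g : Fin n → Fin n}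
    (hf : IsIdOrRev f) (hg : IsIdOrRev g) {a b : Fin n} (hab : f a = g b) (k : Fin n) :
    f k = g (if b = a then k else k.rev) := by
  have hrev := Fin.rev_ne_self_of_even heven
  rcases hf with hf | hf <;> rcases hg with hg | hg <;> simp only [hf, hg] at hab ⊢
  · simp [hab]
  · rw [hab, if_neg (hrev b).symm, Fin.rev_rev]
  · simp [← hab, hrev a]
  · simp [Fin.rev_inj.mp hab]

def movingCoords (x : Fin d → Fin n) (L : Finset (Fin d → Fin n)) : Finset (Fin d) :=
  univ.filter fun i => ∃ y ∈ L, y i ≠ x i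

theorem mem_movingCoords_image_iff (heven : Even n) {v : Fin n → Fin d → Fin n} {i : Fin d}
    (hv : IsLineCoord (v · i)) {k₀ : Fin n} {x : Fin d → Fin n} (hx : v k₀ = x) :
    i ∈ movingCoords x (image v univ) ↔ IsIdOrRev (v · i) := by
  simp only [movingCoords, mem_filter, mem_univ, true_and, mem_image]
  constructor
  · rintro ⟨_, ⟨j, rfl⟩, hj⟩
    exact (hv.isIdOrRev_or_const (congrFun hx i)).resolve_right fun hc => hj (hc j)
  · intro h
    obtain ⟨j, hj⟩ := h.exists_ne heven (x i)
    exact ⟨v j, ⟨j, rfl⟩, hj⟩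

theorem movingCoords_nonempty {L : Finset (Fin d → Fin n)} (hL : isWinningLine n d L)
    {x : Fin d → Fin n} (hx : x ∈ L) : (movingCoords x L).Nonempty := by
  obtain ⟨v, rfl, -, i, hi⟩ := hL
  push Not at hi
  obtain ⟨j, hj⟩ := hi (x i)
  exact ⟨i, by simpa [movingCoords] using ⟨j, hj⟩⟩

theorem subset_of_movingCoords_eq (heven : Even n) {L L' : Finset (Fin d → Fin n)}
    (hL : isWinningLine n d L) (hL' : isWinningLine n d L') {x : Fin d → Fin n} (hx : x ∈ L)
    (hx' : x ∈ L') (h : movingCoords x L = movingCoords x L') : L ⊆ L' := by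
  obtain ⟨v, rfl, hv, -⟩ := hL
  obtain ⟨w, rfl, hw, -⟩ := hL'
  obtain ⟨a, -, hva⟩ := mem_image.mp hx
  obtain ⟨b, -, hwb⟩ := mem_image.mp hx'
  simp only [subset_iff, mem_image, mem_univ, true_and, forall_exists_index,
    forall_apply_eq_imp_iff]
  refine fun k => ⟨if b = a then k else k.rev, funext fun i => ?_⟩
  have hmem := congrArg (i ∈ ·) h
  simp only [mem_movingCoords_image_iff heven (hv i) hva,
    mem_movingCoords_image_iff heven (hw i) hwb, eq_iff_iff] at hmem
  rcases IsLineCoord.isIdOrRev_or_const (hv i) (congrFun hva i) with hvi | hvi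
  · exact (hvi.apply_eq_apply_of_apply_eq heven (hmem.mp hvi)
      ((congrFun hva i).trans (congrFun hwb i).symm) k).symm
  · rcases IsLineCoord.isIdOrRev_or_const (hw i) (congrFun hwb i) with hwi | hwi
    · exact absurd (hmem.mpr hwi) fun h' => by simpa [hvi] using h'.exists_ne heven (x i)
    · rw [hvi, hwi]

theorem eq_of_movingCoords_eq (heven : Even n) {L L' : Finset (Fin d → Fin n)}
    (hL : isWinningLine n d L) (hL' : isWinningLine n d L') {x : Fin d → Fin n} (hx : x ∈ L)
    (hx' : x ∈ L') (h : movingCoords x L = movingCoords x L') : L = L' :=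
  (subset_of_movingCoords_eq heven hL hL' hx hx' h).antisymm
    (subset_of_movingCoords_eq heven hL' hL hx' hx h.symm)

def lineDirections (x : Fin d → Fin n) :
    {L : Finset (Fin d → Fin n) // isWinningLine n d L ∧ x ∈ L} →
      {S : Finset (Fin d) // S.Nonempty} :=
  fun L => ⟨movingCoords x L, movingCoords_nonempty L.2.1 L.2.2⟩

theorem lineDirections_injective (heven : Even n) (x : Fin d → Fin n) :
    Function.Injective (lineDirections x) := fun L L' h =>
  Subtype.ext (eq_of_movingCoords_eq heven L.2.1 L'.2.1 L.2.2 L'.2.2 (congrArg Subtype.val h))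

def lineThrough (x : Fin d → Fin n) (c : Fin n) (S : Finset (Fin d)) : Fin n → Fin d → Fin n :=
  fun k i => if i ∈ S then (if x i = c then k else k.rev) else x i

theorem isIdOrRev_lineThrough {x : Fin d → Fin n} {c : Fin n} {S : Finset (Fin d)} {i : Fin d}
    (hi : i ∈ S) : IsIdOrRev (lineThrough x c S · i) := by
  by_cases hxi : x i = c
  · exact .inl fun j => by simp [lineThrough, hi, hxi]
  · exact .inr fun j => by simp [lineThrough, hi, hxi]

theorem isLineCoord_lineThrough (x : Fin d → Fin n) (c : Fin n) (S : Finset (Fin d))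
    (i : Fin d) : IsLineCoord (lineThrough x c S · i) := by
  by_cases hi : i ∈ S
  · exact (isIdOrRev_lineThrough hi).elim .inl (.inr ∘ .inl)
  · exact .inr (.inr ⟨x i, fun j => by simp [lineThrough, hi]⟩)

theorem isWinningLine_image_lineThrough (heven : Even n) (x : Fin d → Fin n) (c : Fin n)
    {S : Finset (Fin d)} (hS : S.Nonempty) :
    isWinningLine n d (image (lineThrough x c S) univ) := by
  obtain ⟨i, hi⟩ := hS
  refine ⟨_, rfl, isLineCoord_lineThrough x c S, i, fun ⟨c', hc'⟩ => ?_⟩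
  obtain ⟨j, hj⟩ := (isIdOrRev_lineThrough hi).exists_ne heven c'
  exact hj (hc' j)

theorem lineThrough_self {x : Fin d → Fin n} {c : Fin n} (hx : ∀ i, x i = c ∨ x i = c.rev)
    (S : Finset (Fin d)) : lineThrough x c S c = x := by
  funext i
  by_cases hxc : x i = c
  · simp [lineThrough, hxc]
  · rw [lineThrough, if_neg hxc, ← (hx i).resolve_left hxc, ite_self]

theorem movingCoords_image_lineThrough (heven : Even n) {x : Fin d → Fin n} {c : Fin n}
    (hx : ∀ i, x i = c ∨ x i = c.rev) (S : Finset (Fin d)) :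
    movingCoords x (image (lineThrough x c S) univ) = S := by
  ext i
  rw [mem_movingCoords_image_iff heven (isLineCoord_lineThrough x c S i) (lineThrough_self hx S)]
  refine ⟨fun h => ?_, isIdOrRev_lineThrough⟩
  by_contra hi
  obtain ⟨j, hj⟩ := h.exists_ne heven (x i)
  simp [lineThrough, hi] at hj

theorem lineDirections_surjective (heven : Even n) {x : Fin d → Fin n} {c : Fin n}
    (hx : ∀ i, x i = c ∨ x i = c.rev) : Function.Surjective (lineDirections x) := fun S =>
  ⟨⟨_, isWinningLine_image_lineThrough heven x c S.2,
      mem_image.mpr ⟨c, mem_univ _, lineThrough_self hx S⟩⟩,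
    Subtype.ext (movingCoords_image_lineThrough heven hx S)⟩

end TicTacToe

open TicTacToe in
theorem degree_le_even_general (n d : ℕ) (heven : Even n)
    (x : Fin d → Fin n) :
    Nat.card {L : Finset (Fin d → Fin n) // isWinningLine n d L ∧ x ∈ L} ≤
      2 ^ d - 1 ∧
    ((∃ c : Fin n, ∀ i : Fin d,
        x i = c ∨ ((x i : ℕ) + 1) + ((c : ℕ) + 1) = n + 1) →
      Nat.card {L : Finset (Fin d → Fin n) // isWinningLine n d L ∧ x ∈ L} =
        2 ^ d - 1) := by
  have hcard : Nat.card {S : Finset (Fin d) // S.Nonempty} = 2 ^ d - 1 := by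
    simpa using Nat.card_finset_nonempty (Fin d)
  refine ⟨hcard ▸ Nat.card_le_card_of_injective _ (lineDirections_injective heven x), ?_⟩
  rintro ⟨c, hc⟩
  have hx : ∀ i, x i = c ∨ x i = c.rev := fun i =>
    (hc i).imp_right fun h => Fin.ext (by rw [Fin.val_rev]; omega)
  exact hcard ▸ Nat.card_eq_of_bijective _
    ⟨lineDirections_injective heven x, lineDirections_surjective heven hx⟩

/-- Let `n ≥ 2` be even and `d ≥ 1`.  Then every cell of the `n^d`
tic-tac-toe board is contained in at most `2^d − 1` winning lines, and if a
cell `x` has the property that there is a common `c ∈ [n]` with each (1-based)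
coordinate of `x` equal to `c` or `n + 1 − c`, then `x` is contained in
exactly `2^d − 1` winning lines.  (Cells are `0`-based, so the 1-based
coordinate is `(x i) + 1`, and `(x i) + 1 = n + 1 - (c + 1)` is expressed
additively as `((x i) + 1) + ((c) + 1) = n + 1`.) -/
theorem degree_le_even (n d : ℕ) (hn : 2 ≤ n) (heven : Even n) (hd : 1 ≤ d)
    (x : Fin d → Fin n) :
    Nat.card {L : Finset (Fin d → Fin n) // isWinningLine n d L ∧ x ∈ L} ≤
      2 ^ d - 1 ∧
    ((∃ c : Fin n, ∀ i : Fin d,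
        x i = c ∨ ((x i : ℕ) + 1) + ((c : ℕ) + 1) = n + 1) →
      Nat.card {L : Finset (Fin d → Fin n) // isWinningLine n d L ∧ x ∈ L} =
        2 ^ d - 1) :=
  degree_le_even_general n d heven x
end

section
/- For every integer n ≥ 5, the family of winning lines of the n^2 tic-tac-toe board admits a pairing: there exists a family of pairwise disjoint 2-element sets of cells, one contained in each winning line. -/
namespace TTT

variable {n : ℕ}

def cell (a b : Fin n) : Fin 2 → Fin n := ![a, b]

@[simp] lemma cell_zero (a b : Fin n) : cell a b 0 = a := rfl
@[simp] lemma cell_one (a b : Fin n) : cell a b 1 = b := rfl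

def rowL (n : ℕ) (r : Fin n) : Finset (Fin 2 → Fin n) :=
  Finset.univ.image (fun j => cell r j)
def colL (n : ℕ) (c : Fin n) : Finset (Fin 2 → Fin n) :=
  Finset.univ.image (fun j => cell j c)
def diagL (n : ℕ) : Finset (Fin 2 → Fin n) :=
  Finset.univ.image (fun j => cell j j)
def adiagL (n : ℕ) : Finset (Fin 2 → Fin n) :=
  Finset.univ.image (fun j => cell j j.rev)

lemma mem_rowL {r : Fin n} {x} : x ∈ rowL n r ↔ x 0 = r := by
  simp only [rowL, Finset.mem_image, Finset.mem_univ, true_and]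
  constructor
  · rintro ⟨j, rfl⟩; rfl
  · intro h; exact ⟨x 1, by funext i; fin_cases i <;> simp [cell, h.symm]⟩

lemma mem_colL {c : Fin n} {x} : x ∈ colL n c ↔ x 1 = c := by
  simp only [colL, Finset.mem_image, Finset.mem_univ, true_and]
  constructor
  · rintro ⟨j, rfl⟩; rfl
  · intro h; exact ⟨x 0, by funext i; fin_cases i <;> simp [cell, h.symm]⟩

lemma mem_diagL {x : Fin 2 → Fin n} : x ∈ diagL n ↔ x 1 = x 0 := by
  simp only [diagL, Finset.mem_image, Finset.mem_univ, true_and]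
  constructor
  · rintro ⟨j, rfl⟩; rfl
  · intro h; exact ⟨x 0, by funext i; fin_cases i <;> simp [cell, h]⟩

lemma mem_adiagL {x : Fin 2 → Fin n} : x ∈ adiagL n ↔ x 1 = (x 0).rev := by
  simp only [adiagL, Finset.mem_image, Finset.mem_univ, true_and]
  constructor
  · rintro ⟨j, rfl⟩; rfl
  · intro h; exact ⟨x 0, by funext i; fin_cases i <;> simp [cell, h]⟩

lemma image_rev {α : Type*} [DecidableEq α] (f : Fin n → α) :
    Finset.univ.image (fun j : Fin n => f j.rev) = Finset.univ.image f := by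
  have h1 : (Finset.univ : Finset (Fin n)).image Fin.rev = Finset.univ := by
    ext x
    simp only [Finset.mem_image, Finset.mem_univ, true_and, iff_true]
    exact ⟨x.rev, Fin.rev_rev x⟩
  conv_rhs => rw [← h1, Finset.image_image]
  rfl

lemma image_rev' {α : Type*} [DecidableEq α] (f g : Fin n → α)
    (h : ∀ j, f j = g j.rev) :
    Finset.univ.image f = Finset.univ.image g := by
  rw [show f = (fun j : Fin n => g j.rev) from funext h]
  exact image_rev g

lemma classify (hn : 5 ≤ n) {L} (h : isWinningLine n 2 L) :
    (∃ r, L = rowL n r) ∨ (∃ c, L = colL n c) ∨ L = diagL n ∨ L = adiagL n := by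
  obtain ⟨v, rfl, hco, hnc⟩ := h
  have himg : ∀ (f g : Fin n → Fin n), (∀ j, v j 0 = f j) → (∀ j, v j 1 = g j) →
      Finset.image v Finset.univ = Finset.univ.image (fun j => cell (f j) (g j)) := by
    intro f g hf hg
    apply Finset.image_congr
    intro j _
    funext i
    fin_cases i
    · exact hf j
    · exact hg j
  have h0 := hco 0
  have h1 := hco 1
  rcases h0 with h0 | h0 | ⟨a, h0⟩ <;> rcases h1 with h1 | h1 | ⟨b, h1⟩
  · exact .inr (.inr (.inl (himg _ _ h0 h1)))
  · exact .inr (.inr (.inr (himg _ _ h0 h1)))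
  · exact .inr (.inl ⟨b, himg _ _ h0 h1⟩)
  · refine .inr (.inr (.inr ?_))
    rw [himg _ _ h0 h1, adiagL]
    exact image_rev' _ _ (fun j => by rw [Fin.rev_rev])
  · refine .inr (.inr (.inl ?_))
    rw [himg _ _ h0 h1, diagL]
    exact image_rev' _ _ (fun j => rfl)
  · refine .inr (.inl ⟨b, ?_⟩)
    rw [himg _ _ h0 h1, colL]
    exact image_rev' _ _ (fun j => rfl)
  · exact .inl ⟨a, himg _ _ h0 h1⟩
  · refine .inl ⟨a, ?_⟩
    rw [himg _ _ h0 h1, rowL]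
    exact image_rev' _ _ (fun j => rfl)
  · obtain ⟨i, hi⟩ := hnc
    fin_cases i
    · exact absurd ⟨a, h0⟩ hi
    · exact absurd ⟨b, h1⟩ hi

def rPair (hn : 5 ≤ n) (r : Fin n) : Finset (Fin 2 → Fin n) :=
  if r.val = 0 then {cell r ⟨n-2, by omega⟩, cell r ⟨n-1, by omega⟩}
  else if r.val = 1 then {cell r ⟨n-3, by omega⟩, cell r ⟨n-1, by omega⟩}
  else {cell r ⟨0, by omega⟩, cell r ⟨1, by omega⟩}

def cPair (hn : 5 ≤ n) (c : Fin n) : Finset (Fin 2 → Fin n) :=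
  if c.val = n-3 then {cell ⟨n-2, by omega⟩ c, cell ⟨n-1, by omega⟩ c}
  else if c.val = n-2 then {cell ⟨2, by omega⟩ c, cell ⟨n-1, by omega⟩ c}
  else if c.val = n-1 then {cell ⟨2, by omega⟩ c, cell ⟨3, by omega⟩ c}
  else {cell ⟨0, by omega⟩ c, cell ⟨1, by omega⟩ c}

def dPair (n : ℕ) (hn : 5 ≤ n) : Finset (Fin 2 → Fin n) :=
  {cell ⟨n-2, by omega⟩ ⟨n-2, by omega⟩, cell ⟨n-1, by omega⟩ ⟨n-1, by omega⟩}

def aPair (n : ℕ) (hn : 5 ≤ n) : Finset (Fin 2 → Fin n) :=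
  {cell ⟨1, by omega⟩ ⟨n-2, by omega⟩, cell ⟨2, by omega⟩ ⟨n-3, by omega⟩}

lemma rPair_spec (hn : 5 ≤ n) (r : Fin n) {x} (hx : x ∈ rPair hn r) :
    x 0 = r ∧
      ((r.val = 0 ∧ ((x 1).val = n-2 ∨ (x 1).val = n-1)) ∨
       (r.val = 1 ∧ ((x 1).val = n-3 ∨ (x 1).val = n-1)) ∨
       (2 ≤ r.val ∧ ((x 1).val = 0 ∨ (x 1).val = 1))) := by
  unfold rPair at hx
  split_ifs at hx with h1 h2 <;>
    simp only [Finset.mem_insert, Finset.mem_singleton] at hx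
  · exact ⟨by rcases hx with rfl | rfl <;> rfl,
      Or.inl ⟨h1, by rcases hx with rfl | rfl; exacts [Or.inl rfl, Or.inr rfl]⟩⟩
  · exact ⟨by rcases hx with rfl | rfl <;> rfl,
      Or.inr (Or.inl ⟨h2, by rcases hx with rfl | rfl; exacts [Or.inl rfl, Or.inr rfl]⟩)⟩
  · exact ⟨by rcases hx with rfl | rfl <;> rfl,
      Or.inr (Or.inr ⟨by omega, by rcases hx with rfl | rfl; exacts [Or.inl rfl, Or.inr rfl]⟩)⟩

lemma cPair_spec (hn : 5 ≤ n) (c : Fin n) {x} (hx : x ∈ cPair hn c) :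
    x 1 = c ∧
      ((c.val = n-3 ∧ ((x 0).val = n-2 ∨ (x 0).val = n-1)) ∨
       (c.val = n-2 ∧ ((x 0).val = 2 ∨ (x 0).val = n-1)) ∨
       (c.val = n-1 ∧ ((x 0).val = 2 ∨ (x 0).val = 3)) ∨
       (c.val ≤ n-4 ∧ ((x 0).val = 0 ∨ (x 0).val = 1))) := by
  have hc := c.isLt
  unfold cPair at hx
  split_ifs at hx with h1 h2 h3 <;>
    simp only [Finset.mem_insert, Finset.mem_singleton] at hx
  · exact ⟨by rcases hx with rfl | rfl <;> rfl,
      Or.inl ⟨h1, by rcases hx with rfl | rfl; exacts [Or.inl rfl, Or.inr rfl]⟩⟩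
  · exact ⟨by rcases hx with rfl | rfl <;> rfl,
      Or.inr (Or.inl ⟨h2, by rcases hx with rfl | rfl; exacts [Or.inl rfl, Or.inr rfl]⟩)⟩
  · exact ⟨by rcases hx with rfl | rfl <;> rfl,
      Or.inr (Or.inr (Or.inl ⟨h3, by rcases hx with rfl | rfl; exacts [Or.inl rfl, Or.inr rfl]⟩))⟩
  · exact ⟨by rcases hx with rfl | rfl <;> rfl,
      Or.inr (Or.inr (Or.inr ⟨by omega, by rcases hx with rfl | rfl; exacts [Or.inl rfl, Or.inr rfl]⟩))⟩

lemma dPair_spec (hn : 5 ≤ n) {x} (hx : x ∈ dPair n hn) :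
    ((x 0).val = n-2 ∧ (x 1).val = n-2) ∨ ((x 0).val = n-1 ∧ (x 1).val = n-1) := by
  unfold dPair at hx
  simp only [Finset.mem_insert, Finset.mem_singleton] at hx
  rcases hx with rfl | rfl; exacts [Or.inl ⟨rfl, rfl⟩, Or.inr ⟨rfl, rfl⟩]

lemma aPair_spec (hn : 5 ≤ n) {x} (hx : x ∈ aPair n hn) :
    ((x 0).val = 1 ∧ (x 1).val = n-2) ∨ ((x 0).val = 2 ∧ (x 1).val = n-3) := by
  unfold aPair at hx
  simp only [Finset.mem_insert, Finset.mem_singleton] at hx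
  rcases hx with rfl | rfl; exacts [Or.inl ⟨rfl, rfl⟩, Or.inr ⟨rfl, rfl⟩]


lemma cell_ne₁ {a b a' b' : Fin n} (h : a.val ≠ a'.val) : cell a b ≠ cell a' b' :=
  fun he => h (congrArg Fin.val (congrFun he 0))

lemma cell_ne₂ {a b a' b' : Fin n} (h : b.val ≠ b'.val) : cell a b ≠ cell a' b' :=
  fun he => h (congrArg Fin.val (congrFun he 1))

lemma rPair_subset (hn : 5 ≤ n) (r : Fin n) : rPair hn r ⊆ rowL n r :=
  fun _ hx => mem_rowL.2 (rPair_spec hn r hx).1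

lemma cPair_subset (hn : 5 ≤ n) (c : Fin n) : cPair hn c ⊆ colL n c :=
  fun _ hx => mem_colL.2 (cPair_spec hn c hx).1

lemma dPair_subset (hn : 5 ≤ n) : dPair n hn ⊆ diagL n := by
  intro x hx
  rcases dPair_spec hn hx with ⟨h0, h1⟩ | ⟨h0, h1⟩ <;>
    exact mem_diagL.2 (Fin.val_injective (by omega))

lemma aPair_subset (hn : 5 ≤ n) : aPair n hn ⊆ adiagL n := by
  intro x hx
  have hrev : ((x 0).rev).val = n - 1 - (x 0).val := by
    rw [Fin.val_rev]; omega
  rcases aPair_spec hn hx with ⟨h0, h1⟩ | ⟨h0, h1⟩ <;>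
    exact mem_adiagL.2 (Fin.val_injective (by omega))

lemma rPair_card (hn : 5 ≤ n) (r : Fin n) : (rPair hn r).card = 2 := by
  unfold rPair
  split_ifs <;>
    exact Finset.card_pair (cell_ne₂ (by simp only [Fin.val_mk]; omega))

lemma cPair_card (hn : 5 ≤ n) (c : Fin n) : (cPair hn c).card = 2 := by
  unfold cPair
  split_ifs <;>
    exact Finset.card_pair (cell_ne₁ (by simp only [Fin.val_mk]; omega))

lemma dPair_card (hn : 5 ≤ n) : (dPair n hn).card = 2 :=
  Finset.card_pair (cell_ne₁ (by simp only [Fin.val_mk]; omega))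

lemma aPair_card (hn : 5 ≤ n) : (aPair n hn).card = 2 :=
  Finset.card_pair (cell_ne₁ (by simp only [Fin.val_mk]; omega))

lemma disj_rr (hn : 5 ≤ n) {r r' : Fin n} (h : r ≠ r') :
    Disjoint (rPair hn r) (rPair hn r') := by
  rw [Finset.disjoint_left]
  intro x hx hx'
  exact h (((rPair_spec hn r hx).1).symm.trans (rPair_spec hn r' hx').1)

lemma disj_cc (hn : 5 ≤ n) {c c' : Fin n} (h : c ≠ c') :
    Disjoint (cPair hn c) (cPair hn c') := by
  rw [Finset.disjoint_left]
  intro x hx hx'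
  exact h (((cPair_spec hn c hx).1).symm.trans (cPair_spec hn c' hx').1)

lemma disj_rc (hn : 5 ≤ n) (r c : Fin n) :
    Disjoint (rPair hn r) (cPair hn c) := by
  rw [Finset.disjoint_left]
  intro x hx hx'
  obtain ⟨e1, P⟩ := rPair_spec hn r hx
  obtain ⟨e2, Q⟩ := cPair_spec hn c hx'
  have v1 : (x 0).val = r.val := congrArg Fin.val e1
  have v2 : (x 1).val = c.val := congrArg Fin.val e2
  have := r.isLt
  have := c.isLt
  omega

lemma disj_rd (hn : 5 ≤ n) (r : Fin n) :
    Disjoint (rPair hn r) (dPair n hn) := by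
  rw [Finset.disjoint_left]
  intro x hx hx'
  obtain ⟨e1, P⟩ := rPair_spec hn r hx
  have v1 : (x 0).val = r.val := congrArg Fin.val e1
  have Q := dPair_spec hn hx'
  have := r.isLt
  omega

lemma disj_ra (hn : 5 ≤ n) (r : Fin n) :
    Disjoint (rPair hn r) (aPair n hn) := by
  rw [Finset.disjoint_left]
  intro x hx hx'
  obtain ⟨e1, P⟩ := rPair_spec hn r hx
  have v1 : (x 0).val = r.val := congrArg Fin.val e1
  have Q := aPair_spec hn hx'
  have := r.isLt
  omega

lemma disj_cd (hn : 5 ≤ n) (c : Fin n) :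
    Disjoint (cPair hn c) (dPair n hn) := by
  rw [Finset.disjoint_left]
  intro x hx hx'
  obtain ⟨e2, Q⟩ := cPair_spec hn c hx
  have v2 : (x 1).val = c.val := congrArg Fin.val e2
  have P := dPair_spec hn hx'
  have := c.isLt
  omega

lemma disj_ca (hn : 5 ≤ n) (c : Fin n) :
    Disjoint (cPair hn c) (aPair n hn) := by
  rw [Finset.disjoint_left]
  intro x hx hx'
  obtain ⟨e2, Q⟩ := cPair_spec hn c hx
  have v2 : (x 1).val = c.val := congrArg Fin.val e2
  have P := aPair_spec hn hx'
  have := c.isLt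
  omega

lemma disj_da (hn : 5 ≤ n) :
    Disjoint (dPair n hn) (aPair n hn) := by
  rw [Finset.disjoint_left]
  intro x hx hx'
  have P := dPair_spec hn hx
  have Q := aPair_spec hn hx'
  omega

lemma rowL_inj {r r' : Fin n} (h : rowL n r = rowL n r') : r = r' := by
  have m : cell r r ∈ rowL n r := mem_rowL.2 rfl
  rw [h] at m
  exact mem_rowL.1 m

lemma colL_inj {c c' : Fin n} (h : colL n c = colL n c') : c = c' := by
  have m : cell c c ∈ colL n c := mem_colL.2 rfl
  rw [h] at m
  exact mem_colL.1 m

lemma row_ne_col (hn : 5 ≤ n) (r c : Fin n) : rowL n r ≠ colL n c := by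
  intro h
  have m0 : cell r ⟨0, by omega⟩ ∈ rowL n r := mem_rowL.2 rfl
  have m1 : cell r ⟨1, by omega⟩ ∈ rowL n r := mem_rowL.2 rfl
  rw [h] at m0 m1
  have e0 := congrArg Fin.val (mem_colL.1 m0)
  have e1 := congrArg Fin.val (mem_colL.1 m1)
  simp only [cell_one, Fin.val_mk] at e0 e1
  omega

lemma row_ne_diag (hn : 5 ≤ n) (r : Fin n) : rowL n r ≠ diagL n := by
  intro h
  have m0 : cell r ⟨0, by omega⟩ ∈ rowL n r := mem_rowL.2 rfl
  have m1 : cell r ⟨1, by omega⟩ ∈ rowL n r := mem_rowL.2 rfl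
  rw [h] at m0 m1
  have e0 := congrArg Fin.val (mem_diagL.1 m0)
  have e1 := congrArg Fin.val (mem_diagL.1 m1)
  simp only [cell_zero, cell_one, Fin.val_mk] at e0 e1
  omega

lemma row_ne_adiag (hn : 5 ≤ n) (r : Fin n) : rowL n r ≠ adiagL n := by
  intro h
  have m0 : cell r ⟨0, by omega⟩ ∈ rowL n r := mem_rowL.2 rfl
  have m1 : cell r ⟨1, by omega⟩ ∈ rowL n r := mem_rowL.2 rfl
  rw [h] at m0 m1
  have e0 := congrArg Fin.val (mem_adiagL.1 m0)
  have e1 := congrArg Fin.val (mem_adiagL.1 m1)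
  simp only [cell_zero, cell_one, Fin.val_mk] at e0 e1
  omega

lemma col_ne_diag (hn : 5 ≤ n) (c : Fin n) : colL n c ≠ diagL n := by
  intro h
  have m0 : cell ⟨0, by omega⟩ c ∈ colL n c := mem_colL.2 rfl
  have m1 : cell ⟨1, by omega⟩ c ∈ colL n c := mem_colL.2 rfl
  rw [h] at m0 m1
  have e0 := congrArg Fin.val (mem_diagL.1 m0)
  have e1 := congrArg Fin.val (mem_diagL.1 m1)
  simp only [cell_zero, cell_one, Fin.val_mk] at e0 e1
  omega

lemma col_ne_adiag (hn : 5 ≤ n) (c : Fin n) : colL n c ≠ adiagL n := by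
  intro h
  have m0 : cell ⟨0, by omega⟩ c ∈ colL n c := mem_colL.2 rfl
  have m1 : cell ⟨1, by omega⟩ c ∈ colL n c := mem_colL.2 rfl
  rw [h] at m0 m1
  have e0 := congrArg Fin.val (mem_adiagL.1 m0)
  have e1 := congrArg Fin.val (mem_adiagL.1 m1)
  simp only [cell_zero, cell_one, Fin.val_rev, Fin.val_mk] at e0 e1
  omega

lemma diag_ne_adiag (hn : 5 ≤ n) : diagL n ≠ adiagL n := by
  intro h
  have m0 : cell (⟨0, by omega⟩ : Fin n) ⟨0, by omega⟩ ∈ diagL n := mem_diagL.2 rfl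
  rw [h] at m0
  have e0 := congrArg Fin.val (mem_adiagL.1 m0)
  simp only [cell_zero, cell_one, Fin.val_rev, Fin.val_mk] at e0
  omega

open Classical in
noncomputable def pFun (n : ℕ) (hn : 5 ≤ n) :
    Finset (Fin 2 → Fin n) → Finset (Fin 2 → Fin n) := fun L =>
  if h : ∃ r, L = rowL n r then rPair hn h.choose
  else if h : ∃ c, L = colL n c then cPair hn h.choose
  else if L = diagL n then dPair n hn
  else aPair n hn

lemma pFun_row (hn : 5 ≤ n) (r : Fin n) : pFun n hn (rowL n r) = rPair hn r := by
  have h : ∃ r', rowL n r = rowL n r' := ⟨r, rfl⟩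
  simp only [pFun]
  rw [dif_pos h, ← rowL_inj h.choose_spec]

lemma pFun_col (hn : 5 ≤ n) (c : Fin n) : pFun n hn (colL n c) = cPair hn c := by
  have h1 : ¬∃ r, colL n c = rowL n r := by
    rintro ⟨r, hr⟩
    exact row_ne_col hn r c hr.symm
  have h : ∃ c', colL n c = colL n c' := ⟨c, rfl⟩
  simp only [pFun]
  rw [dif_neg h1, dif_pos h, ← colL_inj h.choose_spec]

lemma pFun_diag (hn : 5 ≤ n) : pFun n hn (diagL n) = dPair n hn := by
  have h1 : ¬∃ r, diagL n = rowL n r := by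
    rintro ⟨r, hr⟩
    exact row_ne_diag hn r hr.symm
  have h2 : ¬∃ c, diagL n = colL n c := by
    rintro ⟨c, hc⟩
    exact col_ne_diag hn c hc.symm
  simp only [pFun]
  rw [dif_neg h1, dif_neg h2]
  simp

lemma pFun_adiag (hn : 5 ≤ n) : pFun n hn (adiagL n) = aPair n hn := by
  have h1 : ¬∃ r, adiagL n = rowL n r := by
    rintro ⟨r, hr⟩
    exact row_ne_adiag hn r hr.symm
  have h2 : ¬∃ c, adiagL n = colL n c := by
    rintro ⟨c, hc⟩
    exact col_ne_adiag hn c hc.symm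
  have h3 : adiagL n ≠ diagL n := (diag_ne_adiag hn).symm
  simp only [pFun]
  rw [dif_neg h1, dif_neg h2, if_neg h3]

end TTT



/-- For every integer `n ≥ 5`, the family of winning lines of the `n^2`
tic-tac-toe board admits a pairing: there exists a family of pairwise
disjoint 2-element sets of cells, one contained in each winning line. -/
theorem pairing_n_squared_of_ge_five (n : ℕ) (hn : 5 ≤ n) :
    ∃ p : Finset (Fin 2 → Fin n) → Finset (Fin 2 → Fin n),
      (∀ L, isWinningLine n 2 L → p L ⊆ L ∧ (p L).card = 2) ∧
      (∀ L L', isWinningLine n 2 L → isWinningLine n 2 L' → L ≠ L' →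
        Disjoint (p L) (p L')) := by
  refine ⟨TTT.pFun n hn, ?_, ?_⟩
  · intro L hL
    rcases TTT.classify hn hL with ⟨r, rfl⟩ | ⟨c, rfl⟩ | rfl | rfl
    · rw [TTT.pFun_row hn r]
      exact ⟨TTT.rPair_subset hn r, TTT.rPair_card hn r⟩
    · rw [TTT.pFun_col hn c]
      exact ⟨TTT.cPair_subset hn c, TTT.cPair_card hn c⟩
    · rw [TTT.pFun_diag hn]
      exact ⟨TTT.dPair_subset hn, TTT.dPair_card hn⟩
    · rw [TTT.pFun_adiag hn]
      exact ⟨TTT.aPair_subset hn, TTT.aPair_card hn⟩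
  · intro L L' hL hL' hne
    rcases TTT.classify hn hL with ⟨r, rfl⟩ | ⟨c, rfl⟩ | rfl | rfl <;>
      rcases TTT.classify hn hL' with ⟨r', rfl⟩ | ⟨c', rfl⟩ | rfl | rfl
    · rw [TTT.pFun_row hn r, TTT.pFun_row hn r']
      exact TTT.disj_rr hn (fun h => hne (by rw [h]))
    · rw [TTT.pFun_row hn r, TTT.pFun_col hn c']
      exact TTT.disj_rc hn r c'
    · rw [TTT.pFun_row hn r, TTT.pFun_diag hn]
      exact TTT.disj_rd hn r
    · rw [TTT.pFun_row hn r, TTT.pFun_adiag hn]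
      exact TTT.disj_ra hn r
    · rw [TTT.pFun_col hn c, TTT.pFun_row hn r']
      exact (TTT.disj_rc hn r' c).symm
    · rw [TTT.pFun_col hn c, TTT.pFun_col hn c']
      exact TTT.disj_cc hn (fun h => hne (by rw [h]))
    · rw [TTT.pFun_col hn c, TTT.pFun_diag hn]
      exact TTT.disj_cd hn c
    · rw [TTT.pFun_col hn c, TTT.pFun_adiag hn]
      exact TTT.disj_ca hn c
    · rw [TTT.pFun_diag hn, TTT.pFun_row hn r']
      exact (TTT.disj_rd hn r').symm
    · rw [TTT.pFun_diag hn, TTT.pFun_col hn c']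
      exact (TTT.disj_cd hn c').symm
    · exact absurd rfl hne
    · rw [TTT.pFun_diag hn, TTT.pFun_adiag hn]
      exact TTT.disj_da hn
    · rw [TTT.pFun_adiag hn, TTT.pFun_row hn r']
      exact (TTT.disj_ra hn r').symm
    · rw [TTT.pFun_adiag hn, TTT.pFun_col hn c']
      exact (TTT.disj_ca hn c').symm
    · rw [TTT.pFun_adiag hn, TTT.pFun_diag hn]
      exact (TTT.disj_da hn).symm
    · exact absurd rfl hne
end

section
/- Bigamy corollary of the König–Hall–Egerváry matching theorem: let V be a finite set and E a finite family of finite subsets of V. If for every subfamily G ⊆ E the inequality |⋃_{S ∈ G} S| ≥ 2|G| holds, then E admits a pairing: there exists a family (p_S)_{S ∈ E} of pairwise disjoint 2-element sets with p_S ⊆ S for every S ∈ E. -/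
/-- Bigamy corollary of the König–Hall–Egerváry matching theorem: let `V` be
a finite set and `E` a finite family of finite subsets of `V`.  If for every
subfamily `G ⊆ E` the inequality `|⋃_{S ∈ G} S| ≥ 2|G|` holds, then `E`
admits a pairing: there exists a family `(p S)_{S ∈ E}` of pairwise disjoint
2-element sets with `p S ⊆ S` for every `S ∈ E`. -/
theorem bigamy_corollary {V : Type} [Fintype V] [DecidableEq V]
    (E : Finset (Finset V))
    (h : ∀ G ⊆ E, 2 * G.card ≤ (G.biUnion id).card) :
    ∃ p : Finset V → Finset V,
      (∀ S ∈ E, p S ⊆ S ∧ (p S).card = 2) ∧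
      (∀ S ∈ E, ∀ T ∈ E, S ≠ T → Disjoint (p S) (p T)) := by
  classical
  set ι := {S : Finset V // S ∈ E} × Bool
  set t : ι → Finset V := fun x => x.1.1 with ht
  have hall : ∀ s : Finset ι, s.card ≤ (s.biUnion t).card := by
    intro s
    set G : Finset (Finset V) := s.image (fun x => x.1.1) with hG
    have hGE : G ⊆ E := by
      intro S hS
      simp only [hG, Finset.mem_image] at hS
      obtain ⟨x, _, rfl⟩ := hS
      exact x.1.2
    have hunion : s.biUnion t = G.biUnion id := by
      rw [hG, Finset.image_biUnion]; rfl
    have hcard : s.card ≤ 2 * G.card := by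
      have hinj : Set.InjOn (fun x : ι => (x.1.1, x.2)) s := by
        intro a _ b _ hab
        simp only [Prod.mk.injEq] at hab
        exact Prod.ext (Subtype.ext hab.1) hab.2
      have := Finset.card_image_of_injOn hinj
      calc s.card = (s.image fun x : ι => (x.1.1, x.2)).card := this.symm
        _ ≤ (G ×ˢ (Finset.univ : Finset Bool)).card := by
            apply Finset.card_le_card
            intro y hy
            simp only [Finset.mem_image] at hy
            obtain ⟨x, hx, rfl⟩ := hy
            simp only [Finset.mem_product, Finset.mem_univ, and_true]
            exact Finset.mem_image_of_mem _ hx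
        _ = 2 * G.card := by
            simp [Finset.card_product, Fintype.card_bool, mul_comm]
    calc s.card ≤ 2 * G.card := hcard
      _ ≤ (G.biUnion id).card := h G hGE
      _ = (s.biUnion t).card := by rw [hunion]
  obtain ⟨f, hf_inj, hf_mem⟩ := (Finset.all_card_le_biUnion_card_iff_exists_injective t).mp hall
  refine ⟨fun S => if hS : S ∈ E then {f (⟨S, hS⟩, true), f (⟨S, hS⟩, false)} else ∅, ?_, ?_⟩
  · intro S hS
    simp only [dif_pos hS]
    constructor
    · intro x hx
      simp only [Finset.mem_insert, Finset.mem_singleton] at hx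
      rcases hx with rfl | rfl
      · exact hf_mem (⟨S, hS⟩, true)
      · exact hf_mem (⟨S, hS⟩, false)
    · rw [Finset.card_insert_of_notMem, Finset.card_singleton]
      simp only [Finset.mem_singleton]
      intro hcontra
      exact Bool.noConfusion (congrArg Prod.snd (hf_inj hcontra))
  · intro S hS T hT hST
    simp only [dif_pos hS, dif_pos hT]
    rw [Finset.disjoint_left]
    intro a ha hb
    simp only [Finset.mem_insert, Finset.mem_singleton] at ha hb
    have hne : (⟨S, hS⟩ : {S // S ∈ E}) ≠ ⟨T, hT⟩ := fun hc => hST (congrArg Subtype.val hc)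
    rcases ha with rfl | rfl <;> rcases hb with hb | hb <;>
      exact hne (Subtype.ext (congrArg (Subtype.val ∘ Prod.fst) (hf_inj hb)))
end

section
/- Strategy stealing for drawing strategies: let H = (V, E) be a finite hypergraph with E nonempty, and consider the game in which two players alternately claim previously unclaimed vertices, the first player moving first, until all vertices are claimed. If the second player has a strategy guaranteeing that the first player never claims all vertices of any edge of E, then the first player has a strategy guaranteeing that the second player never claims all vertices of any edge of E. -/
/-!
Strategy stealing. The first player makes an arbitrary first move and then plays Breaker's
strategy `σ` in an imagined game in which the real opponent's moves are Maker's: each of them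
is answered by the reply of `σ`, claimed for real if still free and replaced by an arbitrary
free vertex otherwise. A reply that is not free was already claimed by the first player, so
the imagined play stays legal, and its Maker cells are exactly the real opponent's. Any legal
partial play consistent with `σ` extends to a complete one, so Breaker's guarantee keeps every
edge out of these cells.
-/

/-- `BreakerWins V E` : Breaker (the second player) has a winning strategy in
the Maker–Breaker game on the finite vertex type `V` whose edges are the
finsets satisfying `E`.  The two players alternately claim previously
unclaimed vertices (Maker moving first, i.e. making the even-indexed moves)
until all vertices are claimed; a complete play is recorded as a bijection
`f : Fin (card V) → V` listing the moves in order.  Breaker wins the play if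
Maker's claimed vertices never include all vertices of an edge, i.e. no edge
is contained in the set of even-indexed moves. -/
def BreakerWins (V : Type) [Fintype V] (E : Finset V → Prop) : Prop :=
  ∃ σ : List V → V,
    -- `σ` is a legal strategy: at any position where it is Breaker's turn
    -- (oddly many moves made, some vertex still unclaimed), it claims an
    -- unclaimed vertex
    (∀ h : List V, h.Nodup → Odd h.length → h.length < Fintype.card V → σ h ∉ h) ∧
    -- in every complete play in which Breaker follows `σ`, Maker's final
    -- cells (the even-indexed moves) contain no edge
    ∀ f : Fin (Fintype.card V) → V, Function.Bijective f →
      (∀ k : Fin (Fintype.card V), Odd (k : ℕ) →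
        f k = σ (List.ofFn fun j : Fin (k : ℕ) => f ⟨j.1, j.isLt.trans k.isLt⟩)) →
      ∀ e : Finset V, E e →
        ¬ (∀ x ∈ e, ∃ k : Fin (Fintype.card V), Even (k : ℕ) ∧ f k = x)

/-- `FirstPreventsSecond V E` : in the alternating claiming game on the finite
vertex type `V` (two players alternately claim previously unclaimed vertices,
the first player moving first, i.e. making the even-indexed moves, until all
vertices are claimed), the first player has a strategy guaranteeing that the
second player never claims all vertices of any finset satisfying `E`. -/
def FirstPreventsSecond (V : Type) [Fintype V] (E : Finset V → Prop) : Prop :=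
  ∃ σ : List V → V,
    -- `σ` is a legal strategy for the first player
    (∀ h : List V, h.Nodup → Even h.length → h.length < Fintype.card V → σ h ∉ h) ∧
    -- in every complete play in which the first player follows `σ`, the
    -- second player's final cells (the odd-indexed moves) contain no edge
    ∀ f : Fin (Fintype.card V) → V, Function.Bijective f →
      (∀ k : Fin (Fintype.card V), Even (k : ℕ) →
        f k = σ (List.ofFn fun j : Fin (k : ℕ) => f ⟨j.1, j.isLt.trans k.isLt⟩)) →
      ∀ e : Finset V, E e →
        ¬ (∀ x ∈ e, ∃ k : Fin (Fintype.card V), Odd (k : ℕ) ∧ f k = x)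

theorem List.Nodup.getElem_notMem_take {α : Type*} {l : List α} (hl : l.Nodup) {i k : ℕ}
    (hik : k ≤ i) (hi : i < l.length) : l[i] ∉ l.take k := by
  intro hmem
  obtain ⟨a, ha, hla⟩ := List.mem_take_iff_getElem.1 hmem
  rw [hl.getElem_inj_iff] at hla
  omega

namespace ClaimingGame

variable {V : Type*}

def IsLegal (σ : List V → V) (p : ℕ → Prop) (n : ℕ) : Prop :=
  ∀ h : List V, h.Nodup → p h.length → h.length < n → σ h ∉ h

def Follows (σ : List V → V) (p : ℕ → Prop) (P : List V) : Prop :=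
  ∀ j (hj : j < P.length), p j → P[j] = σ (P.take j)

def claimedAt (p : ℕ → Prop) (P : List V) : Set V :=
  {x | ∃ j, ∃ hj : j < P.length, p j ∧ P[j] = x}

theorem Follows.concat {σ : List V → V} {p : ℕ → Prop} {P : List V} (hP : Follows σ p P)
    {v : V} (hv : p P.length → v = σ P) : Follows σ p (P ++ [v]) := by
  intro j hj hpj
  rw [List.length_append, List.length_singleton] at hj
  rcases Nat.lt_succ_iff_lt_or_eq.1 hj with hj | rfl
  · rw [List.getElem_append_left hj, List.take_append_of_le_length hj.le]
    exact hP j hj hpj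
  · simpa using hv hpj

theorem follows_ofFn_iff {n : ℕ} (σ : List V → V) (p : ℕ → Prop) (f : Fin n → V) :
    (∀ k : Fin n, p k →
        f k = σ (List.ofFn fun j : Fin k => f ⟨j, j.isLt.trans k.isLt⟩)) ↔
      Follows σ p (List.ofFn f) := by
  have hprefix (k : Fin n) :
      (List.ofFn fun j : Fin k => f ⟨j, j.isLt.trans k.isLt⟩) = (List.ofFn f).take k :=
    List.ext_getElem (by simp [k.isLt.le]) (by simp)
  simp only [Follows, List.length_ofFn, List.getElem_ofFn, hprefix]
  exact ⟨fun h j hj => h ⟨j, hj⟩, fun h k => h k k.isLt⟩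

theorem mem_claimedAt_ofFn {n : ℕ} (p : ℕ → Prop) (f : Fin n → V) (x : V) :
    x ∈ claimedAt p (List.ofFn f) ↔ ∃ k : Fin n, p k ∧ f k = x := by
  simp [claimedAt, Fin.exists_iff]

theorem claimedAt_mono {p : ℕ → Prop} {P Q : List V} (h : P <+: Q) :
    claimedAt p P ⊆ claimedAt p Q := by
  rintro x ⟨j, hj, hpj, rfl⟩
  exact ⟨j, hj.trans_le h.length_le, hpj, (h.getElem hj).symm⟩

theorem exists_notMem_of_length_lt [Fintype V] (h : List V) (hlen : h.length < Fintype.card V) :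
    ∃ v, v ∉ h :=
  Cardinal.exists_notMem_of_length_lt h (by simpa using hlen)

theorem exists_prefix_length_eq_card [Fintype V] {σ : List V → V} {p : ℕ → Prop}
    (hσ : IsLegal σ p (Fintype.card V)) {P : List V} (hP : P.Nodup)
    (hlen : P.length ≤ Fintype.card V) (hfol : Follows σ p P) :
    ∃ Q, P <+: Q ∧ Q.Nodup ∧ Q.length = Fintype.card V ∧ Follows σ p Q := by
  induction hk : Fintype.card V - P.length generalizing P with
  | zero => exact ⟨P, List.prefix_refl P, hP, by omega, hfol⟩
  | succ k ih =>
    have hlt : P.length < Fintype.card V := by omega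
    obtain ⟨v, hvP, hvσ⟩ : ∃ v, v ∉ P ∧ (p P.length → v = σ P) := by
      by_cases hp : p P.length
      · exact ⟨σ P, hσ P hP hp hlt, fun _ => rfl⟩
      · obtain ⟨v, hv⟩ := exists_notMem_of_length_lt P hlt
        exact ⟨v, hv, hp.elim⟩
    obtain ⟨Q, hPQ, hQ⟩ := ih (List.concat_eq_append ▸ hP.concat hvP) (by simpa using hlt)
      (hfol.concat hvσ) (by simp; omega)
    exact ⟨Q, (List.prefix_append P [v]).trans hPQ, hQ⟩

theorem BreakerWins.exists_isLegal_forall_partial {V : Type} [Fintype V] {E : Finset V → Prop}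
    (h : BreakerWins V E) :
    ∃ σ : List V → V, IsLegal σ Odd (Fintype.card V) ∧
      ∀ P : List V, P.Nodup → P.length ≤ Fintype.card V → Follows σ Odd P →
        ∀ e, E e → ¬ ↑e ⊆ claimedAt Even P := by
  obtain ⟨σ, hσ, hwin⟩ := h
  refine ⟨σ, hσ, fun P hP hlen hfol e he hsub => ?_⟩
  obtain ⟨Q, hPQ, hQ, hQlen, hQfol⟩ := exists_prefix_length_eq_card hσ hP hlen hfol
  obtain ⟨f, rfl⟩ : ∃ f : Fin (Fintype.card V) → V, List.ofFn f = Q :=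
    ⟨fun k => Q[k], List.ext_getElem (by simp [hQlen]) (by simp)⟩
  have hf : Function.Bijective f :=
    (Fintype.bijective_iff_injective_and_card f).2 ⟨List.nodup_ofFn.1 hQ, Fintype.card_fin _⟩
  exact hwin f hf ((follows_ofFn_iff σ Odd f).2 hQfol) e he fun x hx =>
    (mem_claimedAt_ofFn Even f x).1 (claimedAt_mono hPQ (hsub hx))

theorem firstPreventsSecond_of_forall {V : Type} [Fintype V] {E : Finset V → Prop}
    (τ : List V → V) (hτ : IsLegal τ Even (Fintype.card V))
    (hwin : ∀ P : List V, P.Nodup → Follows τ Even P →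
      ∀ e, E e → ¬ ↑e ⊆ claimedAt Odd P) :
    FirstPreventsSecond V E :=
  ⟨τ, hτ, fun f hf hfol e he hsub => hwin _ (List.nodup_ofFn.2 hf.injective)
    ((follows_ofFn_iff τ Even f).1 hfol) e he fun x hx =>
      (mem_claimedAt_ofFn Odd f x).2 (hsub x hx)⟩

section Stealing

variable (σ : List V → V)

def replies (xs : List V) : List V :=
  xs.foldl (fun q x => q ++ [x, σ (q ++ [x])]) []

theorem replies_concat (xs : List V) (x : V) :
    replies σ (xs ++ [x]) = replies σ xs ++ [x, σ (replies σ xs ++ [x])] :=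
  List.foldl_concat ..

@[simp]
theorem length_replies (xs : List V) : (replies σ xs).length = 2 * xs.length := by
  induction xs using List.reverseRecOn with
  | nil => rfl
  | append_singleton xs x ih => simp [replies_concat, ih]; ring

theorem replies_prefix {xs ys : List V} (h : xs <+: ys) : replies σ xs <+: replies σ ys := by
  obtain ⟨zs, rfl⟩ := h
  induction zs using List.reverseRecOn with
  | nil => simp
  | append_singleton zs z ih =>
    rw [← List.append_assoc, replies_concat]
    exact ih.trans (List.prefix_append _ _)

theorem replies_take (xs : List V) (k : ℕ) :
    replies σ (xs.take k) = (replies σ xs).take (2 * k) := by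
  rw [List.prefix_iff_eq_take.1 (replies_prefix σ (xs.take_prefix k)), List.take_eq_take_iff]
  simp only [length_replies, List.length_take]
  omega

theorem getElem_replies_two_mul (xs : List V) (i : ℕ) (hi : 2 * i < (replies σ xs).length) :
    (replies σ xs)[2 * i] = xs[i]'(by simp at hi; omega) := by
  induction xs using List.reverseRecOn with
  | nil => simp at hi
  | append_singleton xs x ih =>
    simp only [replies_concat, List.getElem_append, length_replies]
    split_ifs with h₁ h₂ h₂
    · exact ih (by simpa using h₁)
    · omega
    · omega
    · obtain rfl : i = xs.length := by simp at hi; omega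
      simp

theorem follows_replies (xs : List V) : Follows σ Odd (replies σ xs) := by
  induction xs using List.reverseRecOn with
  | nil => simp [Follows]
  | append_singleton xs x ih =>
    rw [replies_concat, ← List.singleton_append, ← List.append_assoc]
    refine (ih.concat fun h => ?_).concat fun _ => rfl
    simp only [length_replies] at h
    exact absurd h (Nat.not_odd_iff_even.2 (even_two_mul _))

def oddEntries (h : List V) : List V :=
  List.ofFn fun i : Fin (h.length / 2) => h[2 * (i : ℕ) + 1]

theorem oddEntries_take_two_mul (h : List V) (k : ℕ) :
    oddEntries (h.take (2 * k)) = (oddEntries h).take k :=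
  List.ext_getElem (by simp [oddEntries]; omega) (by simp [oddEntries])

theorem claimedAt_odd_subset_replies_oddEntries (P : List V) :
    claimedAt Odd P ⊆ claimedAt Even (replies σ (oddEntries P)) := by
  rintro x ⟨_, hj, ⟨i, rfl⟩, rfl⟩
  refine ⟨2 * i, by simp [oddEntries]; omega, even_two_mul i, ?_⟩
  simp [getElem_replies_two_mul, oddEntries]

theorem length_replies_oddEntries_le (P : List V) :
    (replies σ (oddEntries P)).length ≤ P.length := by
  simp only [length_replies, oddEntries, List.length_ofFn]
  exact Nat.mul_div_le P.length 2

open Classical in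
/-- `oddEntries h` are the opponent's moves; the first player answers them as Breaker `σ`
would in the imagined play `replies σ`, and plays `fresh h` when that reply is already taken. -/
noncomputable def steal (fresh : List V → V) (h : List V) : V :=
  let y := (replies σ (oddEntries h)).getLastD (fresh h)
  if y ∈ h then fresh h else y

theorem isLegal_steal {fresh : List V → V} {p : ℕ → Prop} {n : ℕ}
    (hfresh : ∀ h : List V, h.length < n → fresh h ∉ h) : IsLegal (steal σ fresh) p n := by
  intro h _ _ hlen
  dsimp only [steal]
  split_ifs with hy
  · exact hfresh h hlen
  · exact hy

theorem getElem_replies_oddEntries_mem_take {fresh : List V → V} {P : List V}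
    (hfol : Follows (steal σ fresh) Even P) {j : ℕ} (hj : 2 * j + 2 < P.length) :
    (replies σ (oddEntries P))[2 * j + 1]'(by simp [oddEntries]; omega) ∈
      P.take (2 * j + 3) := by
  have hlast : (replies σ (oddEntries (P.take (2 * j + 2)))).getLastD (fresh (P.take (2 * j + 2)))
      = (replies σ (oddEntries P))[2 * j + 1]'(by simp [oddEntries]; omega) := by
    rw [show 2 * j + 2 = 2 * (j + 1) by ring, oddEntries_take_two_mul, replies_take]
    have hj' : j + 1 ≤ (oddEntries P).length := by simp [oddEntries]; omega
    simp [List.getLast?_eq_getElem?, Nat.min_eq_left hj', show 2 * (j + 1) - 1 = 2 * j + 1 by omega,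
      List.getElem?_take_of_lt (show 2 * j + 1 < 2 * (j + 1) by omega),
      List.getElem?_eq_getElem (show 2 * j + 1 < (replies σ (oddEntries P)).length by simp; omega)]
  have hmove := hfol (2 * j + 2) hj (by simp [Nat.even_add])
  simp only [steal, hlast] at hmove
  split_ifs at hmove with hy
  · rw [hlast] at hy
    exact (List.take_prefix_take_left (i := 2 * j + 2) (by omega)).subset hy
  · rw [← hmove]
    exact List.mem_take_iff_getElem.2 ⟨2 * j + 2, by simp; omega, rfl⟩

theorem nodup_replies_oddEntries {fresh : List V → V} {n : ℕ} (hσ : IsLegal σ Odd n)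
    {P : List V} (hP : P.Nodup) (hlen : P.length ≤ n) (hfol : Follows (steal σ fresh) Even P) :
    (replies σ (oddEntries P)).Nodup := by
  set q := replies σ (oddEntries P)
  have hqlen : q.length = 2 * (P.length / 2) := by simp [q, oddEntries]
  have hq_even (i : ℕ) (hi : 2 * i < q.length) : q[2 * i] = P[2 * i + 1]'(by omega) := by
    simp [q, getElem_replies_two_mul, oddEntries]
  have hnew_even (i : ℕ) (hi : 2 * i < q.length) : q[2 * i] ∉ q.take (2 * i) := by
    intro hmem
    obtain ⟨a, ha, hqa⟩ := List.mem_take_iff_getElem.1 hmem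
    rw [hq_even i hi] at hqa
    rcases Nat.even_or_odd' a with ⟨b, rfl | rfl⟩
    · rw [hq_even b (by omega), hP.getElem_inj_iff] at hqa
      omega
    · have hmem' : q[2 * b + 1] ∈ P.take (2 * b + 3) :=
        getElem_replies_oddEntries_mem_take σ hfol (by omega)
      rw [hqa] at hmem'
      exact hP.getElem_notMem_take (by omega) _ hmem'
  suffices ∀ k ≤ q.length, (q.take k).Nodup by simpa using this q.length le_rfl
  intro k
  induction k with
  | zero => simp
  | succ k ih =>
    intro hk
    have hprev := ih (by omega)
    rw [← List.take_concat_get' q k hk, ← List.concat_eq_append]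
    refine List.Nodup.concat ?_ hprev
    rcases Nat.even_or_odd' k with ⟨i, rfl | rfl⟩
    · exact hnew_even i hk
    · rw [follows_replies σ _ (2 * i + 1) hk (odd_two_mul_add_one i)]
      exact hσ _ hprev (by simp [Nat.min_eq_left (show 2 * i + 1 ≤ q.length by omega)])
        (by simp; omega)

end Stealing

theorem exists_fresh [Fintype V] [Nonempty V] :
    ∃ fresh : List V → V, ∀ h : List V, h.length < Fintype.card V → fresh h ∉ h := by
  have (h : List V) : ∃ v, h.length < Fintype.card V → v ∉ h := by
    by_cases hlen : h.length < Fintype.card V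
    · exact (exists_notMem_of_length_lt h hlen).imp fun v hv _ => hv
    · exact ⟨Classical.arbitrary V, fun h' => absurd h' hlen⟩
  exact ⟨fun h => (this h).choose, fun h => (this h).choose_spec⟩

end ClaimingGame

theorem strategy_stealing_draw_general (V : Type) [Fintype V]
    (E : Finset V → Prop)
    (h : BreakerWins V E) : FirstPreventsSecond V E := by
  open ClaimingGame in
  obtain ⟨σ, hσ, hσwin⟩ := h.exists_isLegal_forall_partial
  have : Nonempty V := ⟨σ []⟩
  obtain ⟨fresh, hfresh⟩ := exists_fresh (V := V)
  refine firstPreventsSecond_of_forall (steal σ fresh) (isLegal_steal σ hfresh)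
    fun P hP hfol e he hsub => hσwin _ ?_ ?_ (follows_replies σ _) e he
      (hsub.trans (claimedAt_odd_subset_replies_oddEntries σ P))
  · exact nodup_replies_oddEntries σ hσ hP hP.length_le_card hfol
  · exact (length_replies_oddEntries_le σ P).trans hP.length_le_card

/-- Strategy stealing for drawing strategies: let `H = (V, E)` be a finite
hypergraph with `E` nonempty, and consider the game in which two players
alternately claim previously unclaimed vertices, the first player moving
first, until all vertices are claimed.  If the second player has a strategy
guaranteeing that the first player never claims all vertices of any edge of
`E`, then the first player has a strategy guaranteeing that the second
player never claims all vertices of any edge of `E`. -/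
theorem strategy_stealing_draw (V : Type) [Fintype V]
    (E : Finset V → Prop) (hE : ∃ e, E e)
    (h : BreakerWins V E) : FirstPreventsSecond V E :=
  strategy_stealing_draw_general V E h
end
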